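/- Let (T,d,ρ,u) be a plane ℝ-tree and let p be a Borel probability measure on T. Then p_↶ is increasing for the contour order: for all α, β ∈ T×[0,1] with α ≺ β, one has p_↶(α) ≤ p_↶(β). -/
import Mathlib


open Set MeasureTheory Filter Metric

/-- The metric segment `[[x,y]]` between `x` and `y`. -/
def geoSeg {T : Type*} [MetricSpace T] (x y : T) : Set T :=
  {z | dist x z + dist z y = dist x y}

/-- `(T,d)` is an `ℝ`-tree: it is geodesic (any two points are joined by a geodesic
segment, which is `geoSeg x y`) and loopless (this segment is the unique arc joining
`x` and `y`). -/
structure IsRTree (T : Type*) [MetricSpace T] : Prop where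
  geodesic : ∀ x y : T, ∃ γ : ℝ → T, γ 0 = x ∧ γ (dist x y) = y ∧
    (∀ s ∈ Icc (0:ℝ) (dist x y), ∀ t ∈ Icc (0:ℝ) (dist x y),
      dist (γ s) (γ t) = |s - t|) ∧
    γ '' Icc (0:ℝ) (dist x y) = geoSeg x y
  loopless : ∀ x y : T, ∀ f : ℝ → T, ContinuousOn f (Icc (0:ℝ) 1) →
    InjOn f (Icc (0:ℝ) 1) → f 0 = x → f 1 = y → f '' Icc (0:ℝ) 1 = geoSeg x y

/-- The set of connected components of `T \ {x}`. -/
def comps {T : Type*} [MetricSpace T] (x : T) : Set (Set T) :=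
  {C | ∃ y, y ≠ x ∧ C = connectedComponentIn ({x}ᶜ) y}

/-- A plane `ℝ`-tree structure on the metric space `T`: `T` is a separable complete
`ℝ`-tree with a root and a balanced angle function `u`.  `cca x y` is the closest
common ancestor of `x` and `y`. -/
structure PlaneRTree (T : Type*) [MetricSpace T] where
  sep : TopologicalSpace.SeparableSpace T
  cpl : CompleteSpace T
  tree : IsRTree T
  root : T
  cca : T → T → T
  cca_mem : ∀ x y : T, cca x y ∈ geoSeg root x ∩ geoSeg root y
  cca_max : ∀ x y : T, ∀ z ∈ geoSeg root x ∩ geoSeg root y,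
    dist root z ≤ dist root (cca x y)
  u : T → T → ℝ
  u_mem : ∀ x y : T, u x y ∈ Icc (0:ℝ) 1
  u_root : ∀ x : T, u x root = 0
  u_self : ∀ x : T, u x x = 0
  u_eq_iff : ∀ x y z : T, y ≠ x → z ≠ x →
    (u x y = u x z ↔ connectedComponentIn ({x}ᶜ) y = connectedComponentIn ({x}ᶜ) z)
  balanced : ∀ x y : T, (comps x).ncard = 2 → u x y = 0 ∨ u x y = 1/2

namespace PlaneRTree

variable {T : Type*} [MetricSpace T]

open Classical in
/-- The angle `u(x, (y,w))`: it is `u x y` if `x ≠ y`, and `w` if `x = y`. -/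
noncomputable def ang (P : PlaneRTree T) (x : T) (β : T × ℝ) : ℝ :=
  if x = β.1 then β.2 else P.u x β.1

/-- `α ↷ β` : `α` is at the left of `β`. -/
def leftOf (P : PlaneRTree T) (α β : T × ℝ) : Prop :=
  P.ang (P.cca α.1 β.1) α < P.ang (P.cca α.1 β.1) β

/-- `α → β` : `β` is in front of `α`. -/
def frontOf (P : PlaneRTree T) (α β : T × ℝ) : Prop :=
  α.1 ∈ geoSeg P.root β.1 ∧ P.ang α.1 β = α.2

/-- The contour relation `≺` : `α ≺ β` iff `α ↷ β` or `α → β`. -/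
def precOf (P : PlaneRTree T) (α β : T × ℝ) : Prop :=
  P.leftOf α β ∨ P.frontOf α β

end PlaneRTree

namespace PlaneRTree

variable {T : Type*} [MetricSpace T] [MeasurableSpace T] [BorelSpace T]

/-- The measure `p_L`, product of `p` with Lebesgue measure on `[0,1]`. -/
noncomputable def pL (p : Measure T) : Measure (T × ℝ) :=
  p.prod (volume.restrict (Icc (0:ℝ) 1))

/-- `p_↶(α) = p_L {β : β ↷ α}`, the mass at the left of `α`. -/
noncomputable def pleft (P : PlaneRTree T) (p : Measure T) (α : T × ℝ) : ℝ :=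
  (pL p {β : T × ℝ | P.leftOf β α}).toReal

/-- `p_→(α) = p_L {β : α → β}`, the mass in front of `α`. -/
noncomputable def pfront (P : PlaneRTree T) (p : Measure T) (α : T × ℝ) : ℝ :=
  (pL p {β : T × ℝ | P.frontOf α β}).toReal

/-- `p_↷(α) = p_L {β : α ↷ β}`, the mass at the right of `α`. -/
noncomputable def pright (P : PlaneRTree T) (p : Measure T) (α : T × ℝ) : ℝ :=
  (pL p {β : T × ℝ | P.leftOf α β}).toReal

end PlaneRTree

section Aux

variable {T : Type*} [MetricSpace T]

lemma geoSeg_self_left (x y : T) : x ∈ geoSeg x y := by simp [geoSeg]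

lemma geoSeg_self_right (x y : T) : y ∈ geoSeg x y := by simp [geoSeg]

lemma geoSeg_trans {ρ a m x : T} (h1 : a ∈ geoSeg ρ m) (h2 : m ∈ geoSeg ρ x) :
    a ∈ geoSeg ρ x := by
  simp only [geoSeg, Set.mem_setOf_eq] at *
  have t1 := dist_triangle ρ a x
  have t2 := dist_triangle a m x
  linarith

lemma geoSeg_antisymm {ρ a b : T} (h1 : a ∈ geoSeg ρ b) (h2 : b ∈ geoSeg ρ a) :
    a = b := by
  simp only [geoSeg, Set.mem_setOf_eq] at *
  rw [dist_comm b a] at h2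
  have : dist a b = 0 := by linarith
  exact eq_of_dist_eq_zero this

lemma geoSeg_not_mem {ρ a m x : T} (h1 : a ∈ geoSeg ρ m) (hne : a ≠ m)
    (h2 : m ∈ geoSeg ρ x) : a ∉ geoSeg m x := by
  intro h3
  simp only [geoSeg, Set.mem_setOf_eq] at *
  rw [dist_comm m a] at h3
  have t1 := dist_triangle ρ a x
  have : dist a m = 0 := by linarith [dist_nonneg (x := a) (y := m)]
  exact hne (eq_of_dist_eq_zero this)

lemma geoSeg_ordered (tr : IsRTree T) {ρ x c m : T} (hc : c ∈ geoSeg ρ x)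
    (hm : m ∈ geoSeg ρ x) (hd : dist ρ c ≤ dist ρ m) : c ∈ geoSeg ρ m := by
  obtain ⟨γ, h0, hx, hiso, himg⟩ := tr.geodesic ρ x
  rw [← himg] at hc hm
  obtain ⟨s, hs, rfl⟩ := hc
  obtain ⟨t, ht, rfl⟩ := hm
  have h0mem : (0:ℝ) ∈ Set.Icc (0:ℝ) (dist ρ x) := ⟨le_refl _, dist_nonneg⟩
  have hds : dist ρ (γ s) = s := by
    rw [← h0, hiso 0 h0mem s hs, abs_of_nonpos (by linarith [hs.1])]
    ring
  have hdt : dist ρ (γ t) = t := by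
    rw [← h0, hiso 0 h0mem t ht, abs_of_nonpos (by linarith [ht.1])]
    ring
  have hst : s ≤ t := by rw [hds, hdt] at hd; exact hd
  show dist ρ (γ s) + dist (γ s) (γ t) = dist ρ (γ t)
  rw [hds, hdt, hiso s hs t ht, abs_of_nonpos (by linarith)]
  ring

lemma geoSeg_comparable (tr : IsRTree T) {ρ x c m : T} (hc : c ∈ geoSeg ρ x)
    (hm : m ∈ geoSeg ρ x) : c ∈ geoSeg ρ m ∨ m ∈ geoSeg ρ c := by
  rcases le_total (dist ρ c) (dist ρ m) with h | h
  · exact Or.inl (geoSeg_ordered tr hc hm h)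
  · exact Or.inr (geoSeg_ordered tr hm hc h)

lemma geoSeg_preconnected (tr : IsRTree T) (x y : T) :
    IsPreconnected (geoSeg x y) := by
  obtain ⟨γ, h0, hx, hiso, himg⟩ := tr.geodesic x y
  rw [← himg]
  refine IsPreconnected.image isPreconnected_Icc γ ?_
  refine LipschitzOnWith.continuousOn (K := 1) ?_
  apply LipschitzOnWith.of_dist_le_mul
  intro s hs t ht
  rw [hiso s hs t ht]
  simp [Real.dist_eq]

namespace PlaneRTree

lemma le_cca (P : PlaneRTree T) {c x y : T} (hx : c ∈ geoSeg P.root x)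
    (hy : c ∈ geoSeg P.root y) : c ∈ geoSeg P.root (P.cca x y) :=
  geoSeg_ordered P.tree hx (P.cca_mem x y).1 (P.cca_max x y c ⟨hx, hy⟩)

lemma comp_eq (P : PlaneRTree T) {a b x y : T} (h1 : a ∈ geoSeg P.root b)
    (hab : a ≠ b) (hx : b ∈ geoSeg P.root x) (hy : b ∈ geoSeg P.root y) :
    connectedComponentIn ({a}ᶜ : Set T) x = connectedComponentIn ({a}ᶜ) y := by
  have hax : a ∉ geoSeg b x := geoSeg_not_mem h1 hab hx
  have hay : a ∉ geoSeg b y := geoSeg_not_mem h1 hab hy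
  have hconn : IsPreconnected (geoSeg b x ∪ geoSeg b y) :=
    IsPreconnected.union b (geoSeg_self_left b x) (geoSeg_self_left b y)
      (geoSeg_preconnected P.tree b x) (geoSeg_preconnected P.tree b y)
  have hsub : (geoSeg b x ∪ geoSeg b y) ⊆ ({a}ᶜ : Set T) := by
    rintro z (hz | hz) hza
    · exact hax (Set.mem_singleton_iff.mp hza ▸ hz)
    · exact hay (Set.mem_singleton_iff.mp hza ▸ hz)
  have hsub2 : (geoSeg b x ∪ geoSeg b y) ⊆ connectedComponentIn ({a}ᶜ) x :=
    hconn.subset_connectedComponentIn (Or.inl (geoSeg_self_right b x)) hsub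
  exact connectedComponentIn_eq (hsub2 (Or.inr (geoSeg_self_right b y)))

lemma u_eq (P : PlaneRTree T) {a b x y : T} (h1 : a ∈ geoSeg P.root b)
    (hab : a ≠ b) (hx : b ∈ geoSeg P.root x) (hy : b ∈ geoSeg P.root y) :
    P.u a x = P.u a y := by
  have hxa : x ≠ a := fun h =>
    geoSeg_not_mem h1 hab hx (h ▸ geoSeg_self_right b x)
  have hya : y ≠ a := fun h =>
    geoSeg_not_mem h1 hab hy (h ▸ geoSeg_self_right b y)
  exact (P.u_eq_iff a x y hxa hya).mpr (P.comp_eq h1 hab hx hy)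

lemma ang_eq_u (P : PlaneRTree T) {a b : T} (β : T × ℝ)
    (h1 : a ∈ geoSeg P.root b) (hab : a ≠ b) (hb : b ∈ geoSeg P.root β.1) :
    P.ang a β = P.u a β.1 := by
  have : β.1 ≠ a := fun h =>
    geoSeg_not_mem h1 hab hb (h ▸ geoSeg_self_right b β.1)
  rw [PlaneRTree.ang, if_neg (fun h => this h.symm)]

lemma ang_eq_ang (P : PlaneRTree T) {a b : T} (γ β : T × ℝ)
    (h1 : a ∈ geoSeg P.root b) (hab : a ≠ b)
    (hγ : b ∈ geoSeg P.root γ.1) (hβ : b ∈ geoSeg P.root β.1) :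
    P.ang a γ = P.ang a β := by
  rw [P.ang_eq_u γ h1 hab hγ, P.ang_eq_u β h1 hab hβ]
  exact P.u_eq h1 hab hγ hβ

/-- Key lemma: if `α ≺ β` then anything at the left of `α` is at the left of `β`. -/
lemma leftOf_mono (P : PlaneRTree T) {α β : T × ℝ} (h : P.precOf α β)
    (γ : T × ℝ) (hγ : P.leftOf γ α) : P.leftOf γ β := by
  have hax : P.cca γ.1 α.1 ∈ geoSeg P.root α.1 := (P.cca_mem γ.1 α.1).2
  have haz : P.cca γ.1 α.1 ∈ geoSeg P.root γ.1 := (P.cca_mem γ.1 α.1).1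
  have hbz : P.cca γ.1 β.1 ∈ geoSeg P.root γ.1 := (P.cca_mem γ.1 β.1).1
  have hby : P.cca γ.1 β.1 ∈ geoSeg P.root β.1 := (P.cca_mem γ.1 β.1).2
  show P.ang (P.cca γ.1 β.1) γ < P.ang (P.cca γ.1 β.1) β
  rcases h with hL | hF
  · -- case α ↷ β
    have hmx : P.cca α.1 β.1 ∈ geoSeg P.root α.1 := (P.cca_mem α.1 β.1).1
    have hmy : P.cca α.1 β.1 ∈ geoSeg P.root β.1 := (P.cca_mem α.1 β.1).2
    have hA : P.ang (P.cca α.1 β.1) α < P.ang (P.cca α.1 β.1) β := hL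
    have hγ' : P.ang (P.cca γ.1 α.1) γ < P.ang (P.cca γ.1 α.1) α := hγ
    rcases geoSeg_comparable P.tree hax hmx with ham | hma
    · by_cases hameq : P.cca γ.1 α.1 = P.cca α.1 β.1
      · -- a = m ≤ b
        rw [← hameq] at hA hmy
        have hmb : P.cca γ.1 α.1 ∈ geoSeg P.root (P.cca γ.1 β.1) :=
          P.le_cca haz hmy
        by_cases hbm : P.cca γ.1 β.1 = P.cca γ.1 α.1
        · rw [hbm]; exact lt_trans hγ' hA
        · exfalso
          have hne : P.cca γ.1 α.1 ≠ P.cca γ.1 β.1 := fun h => hbm h.symm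
          have := P.ang_eq_ang γ β hmb hne hbz hby
          linarith
      · -- a < m, so b = a
        have halb : P.cca γ.1 α.1 ∈ geoSeg P.root (P.cca γ.1 β.1) :=
          P.le_cca haz (geoSeg_trans ham hmy)
        have hbla : P.cca γ.1 β.1 ∈ geoSeg P.root (P.cca γ.1 α.1) := by
          rcases geoSeg_comparable P.tree hby hmy with hbm | hmb
          · exact P.le_cca hbz (geoSeg_trans hbm hmx)
          · exact absurd (geoSeg_antisymm ham (P.le_cca (geoSeg_trans hmb hbz) hmx))
              hameq
        rw [geoSeg_antisymm hbla halb]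
        have : P.ang (P.cca γ.1 α.1) α = P.ang (P.cca γ.1 α.1) β :=
          P.ang_eq_ang α β ham hameq hmx hmy
        linarith
    · by_cases hmeq : P.cca α.1 β.1 = P.cca γ.1 α.1
      · -- m = a ≤ b
        rw [hmeq] at hA hmy
        have hmb : P.cca γ.1 α.1 ∈ geoSeg P.root (P.cca γ.1 β.1) :=
          P.le_cca haz hmy
        by_cases hbm : P.cca γ.1 β.1 = P.cca γ.1 α.1
        · rw [hbm]; exact lt_trans hγ' hA
        · exfalso
          have hne : P.cca γ.1 α.1 ≠ P.cca γ.1 β.1 := fun h => hbm h.symm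
          have := P.ang_eq_ang γ β hmb hne hbz hby
          linarith
      · -- m < a, so b = m
        have hmz : P.cca α.1 β.1 ∈ geoSeg P.root γ.1 := geoSeg_trans hma haz
        have hmlb : P.cca α.1 β.1 ∈ geoSeg P.root (P.cca γ.1 β.1) :=
          P.le_cca hmz hmy
        have hblm : P.cca γ.1 β.1 ∈ geoSeg P.root (P.cca α.1 β.1) := by
          rcases geoSeg_comparable P.tree haz hbz with hab | hba
          · exact absurd (geoSeg_antisymm hma
              (P.le_cca hax (geoSeg_trans hab hby))) hmeq
          · exact P.le_cca (geoSeg_trans hba hax) hby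
        rw [geoSeg_antisymm hblm hmlb]
        have : P.ang (P.cca α.1 β.1) γ = P.ang (P.cca α.1 β.1) α :=
          P.ang_eq_ang γ α hma hmeq haz hax
        linarith
  · -- case α → β
    obtain ⟨hxy, hv⟩ := hF
    have hγ' : P.ang (P.cca γ.1 α.1) γ < P.ang (P.cca γ.1 α.1) α := hγ
    by_cases haeqx : P.cca γ.1 α.1 = α.1
    · -- a = x
      rw [haeqx] at hγ' haz
      have hab : α.1 ∈ geoSeg P.root (P.cca γ.1 β.1) := P.le_cca haz hxy
      have hvα : P.ang α.1 α = α.2 := by rw [PlaneRTree.ang, if_pos rfl]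
      by_cases hba : P.cca γ.1 β.1 = α.1
      · rw [hba, hv]
        rw [hvα] at hγ'
        exact hγ'
      · exfalso
        have hne : α.1 ≠ P.cca γ.1 β.1 := fun h => hba h.symm
        have := P.ang_eq_ang γ β hab hne hbz hby
        rw [hvα] at hγ'
        linarith
    · -- a < x, so b = a
      have halb : P.cca γ.1 α.1 ∈ geoSeg P.root (P.cca γ.1 β.1) :=
        P.le_cca haz (geoSeg_trans hax hxy)
      have hbla : P.cca γ.1 β.1 ∈ geoSeg P.root (P.cca γ.1 α.1) := by
        rcases geoSeg_comparable P.tree hby hxy with hbx | hxb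
        · exact P.le_cca hbz hbx
        · exact absurd (geoSeg_antisymm hax
            (P.le_cca (geoSeg_trans hxb hbz) (geoSeg_self_right P.root α.1)))
            haeqx
      rw [geoSeg_antisymm hbla halb]
      have : P.ang (P.cca γ.1 α.1) α = P.ang (P.cca γ.1 α.1) β :=
        P.ang_eq_ang α β hax haeqx (geoSeg_self_right P.root α.1) hxy
      linarith

end PlaneRTree
end Aux

/-- `p_↶` is increasing for the contour order `≺`. -/
theorem pleft_mono_prec {T : Type*} [MetricSpace T]
    [MeasurableSpace T] [BorelSpace T] (P : PlaneRTree T)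
    (p : Measure T) [IsProbabilityMeasure p]
    (α β : T × ℝ) (hα : α.2 ∈ Icc (0:ℝ) 1) (hβ : β.2 ∈ Icc (0:ℝ) 1)
    (h : P.precOf α β) :
    P.pleft p α ≤ P.pleft p β := by
  have hsub : {g : T × ℝ | P.leftOf g α} ⊆ {g : T × ℝ | P.leftOf g β} :=
    fun g hg => P.leftOf_mono h g hg
  haveI : IsFiniteMeasure (volume.restrict (Icc (0:ℝ) 1)) := by
    constructor
    rw [Measure.restrict_apply_univ]
    simp [Real.volume_Icc]
  haveI : IsFiniteMeasure (PlaneRTree.pL p) := by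
    unfold PlaneRTree.pL; infer_instance
  unfold PlaneRTree.pleft
  exact ENNReal.toReal_mono (measure_ne_top _ _) (measure_mono hsub)
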